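/- arXiv:2207.13614 — 2 statements merged into one kernel-verified Lean document; each statement's English description precedes it below -/
import Mathlib

section
/- Let r ∈ C^∞([0,2π];ℝ³) be parametrized by arclength (|r'| = 1) with Frenet frame (t, n, b), curvature κ and torsion τ satisfying t = r', t' = κn, n' = −κt + τb, b' = −τn on [0,2π], with κ nowhere vanishing, and let g ∈ C^∞([0,2π];ℝ³). If the component of 2r''' + g orthogonal to r' vanishes identically on [0,2π], i.e. (2r''' + g) − ((2r''' + g)·r')r' = 0, then on [0,2π]: −g'·b = 4κ'τ + 2κτ' and (−2κ''/κ + 2τ² − (g'·n)/κ)' + g'·t − 2κκ' = 0. -/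
open MeasureTheory Real Set Filter

noncomputable section

abbrev V3 := Fin 3 → ℝ
abbrev M32 := Fin 3 → Fin 2 → ℝ

/-- Euclidean scalar product on `ℝ³`. -/
def dot3 (a b : V3) : ℝ := ∑ i, a i * b i
/-- Squared euclidean norm on `ℝ³`. -/
def nsq3 (a : V3) : ℝ := dot3 a a
/-- Euclidean norm on `ℝ³`. -/
def norm3 (a : V3) : ℝ := Real.sqrt (nsq3 a)
/-- Frobenius scalar product on `ℝ^{3×2}`. -/
def dotM (A B : M32) : ℝ := ∑ i, ∑ j, A i j * B i j
/-- Frobenius norm on `ℝ^{3×2}`. -/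
def frobM (A : M32) : ℝ := Real.sqrt (dotM A A)
/-- Cross product on `ℝ³`. -/
def cross3 (a b : V3) : V3 :=
  ![a 1 * b 2 - a 2 * b 1, a 2 * b 0 - a 0 * b 2, a 0 * b 1 - a 1 * b 0]

/-- Lebesgue measure on the parameter interval `(0, 2π)`. -/
def μI : Measure ℝ := volume.restrict (Set.Ioo 0 (2 * π))
/-- The open unit disc in `ℝ²`. -/
def Disc : Set (ℝ × ℝ) := {p | p.1 ^ 2 + p.2 ^ 2 < 1}
/-- Lebesgue measure on the unit disc. -/
def μD : Measure (ℝ × ℝ) := volume.restrict Disc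
/-- Arc-length parametrization of the unit circle. -/
def circ (θ : ℝ) : ℝ × ℝ := (Real.cos θ, Real.sin θ)

/-- Gradient matrix of a (at least) `C¹` map `ℝ² → ℝ³`. -/
def gradC1 (V : ℝ × ℝ → V3) (p : ℝ × ℝ) : M32 := fun i j =>
  if j = 0 then fderiv ℝ (fun q => V q i) p (1, 0)
  else fderiv ℝ (fun q => V q i) p (0, 1)

/-- A curve in `W^{2,2}((0,2π);ℝ³)`, through its `C¹` representative `r`:
`r` is differentiable with derivative `r'`, `r'` is absolutely continuous with
density `r''`, and `r'' ∈ L²((0,2π))`. -/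
structure CurveW22 where
  r : ℝ → V3
  r' : ℝ → V3
  r'' : ℝ → V3
  deriv_r : ∀ θ : ℝ, HasDerivAt r (r' θ) θ
  intInt : ∀ θ : ℝ, IntervalIntegrable r'' volume 0 θ
  ac : ∀ θ : ℝ, r' θ = r' 0 + ∫ s in (0:ℝ)..θ, r'' s
  mem2 : MemLp r'' 2 μI

/-- A membrane in `W^{1,2}(D;ℝ³)`: the map `X`, its weak partial derivatives
`Xu`, `Xv`, and its boundary trace `tr` (already composed with `circ`, i.e.
`tr = X̂ ∘ c`), characterized by the Gauss–Green formulas.  The outer unit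
normal of `D` at `circ θ` is `(cos θ, sin θ)`. -/
structure MembraneH1 where
  X : ℝ × ℝ → V3
  Xu : ℝ × ℝ → V3
  Xv : ℝ × ℝ → V3
  tr : ℝ → V3
  memX : MemLp X 2 μD
  memXu : MemLp Xu 2 μD
  memXv : MemLp Xv 2 μD
  memtr : MemLp tr 2 μI
  gauss_u : ∀ φ : ℝ × ℝ → ℝ, ContDiff ℝ 1 φ → ∀ i : Fin 3,
    (∫ p in Disc, (X p i * fderiv ℝ φ p (1, 0) + Xu p i * φ p))
      = ∫ θ in Set.Ioo 0 (2 * π), tr θ i * φ (circ θ) * Real.cos θ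
  gauss_v : ∀ φ : ℝ × ℝ → ℝ, ContDiff ℝ 1 φ → ∀ i : Fin 3,
    (∫ p in Disc, (X p i * fderiv ℝ φ p (0, 1) + Xv p i * φ p))
      = ∫ θ in Set.Ioo 0 (2 * π), tr θ i * φ (circ θ) * Real.sin θ

/-- The weak gradient of a membrane, as a matrix field. -/
def gradM (M : MembraneH1) (p : ℝ × ℝ) : M32 := fun i j =>
  if j = 0 then M.Xu p i else M.Xv p i

/-- Boundary/closure conditions for the curve: clamped at `x₀`, `C¹`-closed,
parametrized by arc length. -/
def CurveBC (x₀ : V3) (rc : CurveW22) : Prop :=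
  rc.r 0 = x₀ ∧ rc.r (2 * π) = x₀ ∧ rc.r' 0 = rc.r' (2 * π) ∧
    ∀ θ ∈ Set.Icc (0:ℝ) (2 * π), nsq3 (rc.r' θ) = 1

/-- The constraint set `𝒞_p`: boundary conditions plus the trace constraint
`X̂ ∘ c = r` a.e. on `(0,2π)`. -/
def Cp (x₀ : V3) (rc : CurveW22) (M : MembraneH1) : Prop :=
  CurveBC x₀ rc ∧ ∀ᵐ θ ∂μI, M.tr θ = rc.r θ

/-- Coercivity and growth bounds for the elasticity tensor:
`α|ζ|² ≤ 𝔠(p)ζ:ζ ≤ β(1+|ζ|²)`. -/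
def Coercive (𝔠 : ℝ × ℝ → M32 →ₗ[ℝ] M32) : Prop :=
  ∃ a b : ℝ, 0 < a ∧ 0 < b ∧ ∀ p : ℝ × ℝ, ∀ ζ : M32,
    a * dotM ζ ζ ≤ dotM (𝔠 p ζ) ζ ∧ dotM (𝔠 p ζ) ζ ≤ b * (1 + dotM ζ ζ)

/-- Measurability of the elasticity tensor field. -/
def MeasTensor (𝔠 : ℝ × ℝ → M32 →ₗ[ℝ] M32) : Prop :=
  ∀ A : M32, Measurable fun p => 𝔠 p A

/-- Membrane (linear elastic) energy `∫_D 𝔠∇X : ∇X`. -/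
def memE (𝔠 : ℝ × ℝ → M32 →ₗ[ℝ] M32) (M : MembraneH1) : ℝ :=
  ∫ p in Disc, dotM (𝔠 p (gradM M p)) (gradM M p)

/-- The total energy `𝓔_p`. -/
def Ep (mu : ℝ) (𝔠 : ℝ × ℝ → M32 →ₗ[ℝ] M32) (rc : CurveW22) (M : MembraneH1) : ℝ :=
  (∫ θ in Set.Ioo 0 (2 * π), nsq3 (rc.r'' θ)) + (mu / 2) * memE 𝔠 M

/-- The penalized energy `𝓔_p^λ`. -/
def Epl (mu : ℝ) (𝔠 : ℝ × ℝ → M32 →ₗ[ℝ] M32) (lam : ℝ) (rc : CurveW22) (M : MembraneH1) : ℝ :=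
  Ep mu 𝔠 rc M + lam * ∫ θ in Set.Ioo 0 (2 * π), nsq3 (M.tr θ - rc.r θ)

/-- Weak convergence in `L²(ν;ℝ³)`, tested against all `L²` functions. -/
def WeakL2 {α : Type*} [MeasurableSpace α] (ν : Measure α) (f : ℕ → α → V3) (g : α → V3) : Prop :=
  ∀ φ : α → V3, MemLp φ 2 ν →
    Tendsto (fun n => ∫ x, dot3 (f n x) (φ x) ∂ν) atTop (nhds (∫ x, dot3 (g x) (φ x) ∂ν))

/-- Weak convergence in `W^{2,2}((0,2π);ℝ³)`: weak `L²` convergence of the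
functions and of their first and second derivatives. -/
def WeakW22 (rh : ℕ → CurveW22) (rc : CurveW22) : Prop :=
  WeakL2 μI (fun n => (rh n).r) rc.r ∧ WeakL2 μI (fun n => (rh n).r') rc.r' ∧
    WeakL2 μI (fun n => (rh n).r'') rc.r''

/-- Weak convergence in `W^{1,2}(D;ℝ³)`: weak `L²` convergence of the maps and
of their weak partial derivatives. -/
def WeakW12 (Mh : ℕ → MembraneH1) (M : MembraneH1) : Prop :=
  WeakL2 μD (fun n => (Mh n).X) M.X ∧ WeakL2 μD (fun n => (Mh n).Xu) M.Xu ∧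
    WeakL2 μD (fun n => (Mh n).Xv) M.Xv

/-- The boundary force density `(𝔠∇X ∘ c) ν_D`. -/
def bforceC (𝔠 : ℝ × ℝ → M32 →ₗ[ℝ] M32) (M : MembraneH1) (s : ℝ) : V3 := fun i =>
  (𝔠 (circ s) (gradM M (circ s))) i 0 * Real.cos s
    + (𝔠 (circ s) (gradM M (circ s))) i 1 * Real.sin s

/-- `F(θ) = ∫₀^θ (𝔠∇X ∘ c) ν_D ds`. -/
def FvecC (𝔠 : ℝ × ℝ → M32 →ₗ[ℝ] M32) (M : MembraneH1) (θ : ℝ) : V3 :=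
  ∫ s in (0:ℝ)..θ, bforceC 𝔠 M s

/-- Component of `v` orthogonal to the unit vector `t`. -/
def perp (t v : V3) : V3 := v - dot3 v t • t

/-- `(r,X)` is a minimizer of `𝓔_p` over `𝒞_p`. -/
def MinEp (x₀ : V3) (mu : ℝ) (𝔠 : ℝ × ℝ → M32 →ₗ[ℝ] M32) (rc : CurveW22) (M : MembraneH1) : Prop :=
  Cp x₀ rc M ∧ ∀ s : CurveW22, ∀ Y : MembraneH1, Cp x₀ s Y → Ep mu 𝔠 rc M ≤ Ep mu 𝔠 s Y

/-- `(r,X)` is a minimizer of `𝓔_p^λ` over `𝒞'_p`. -/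
def MinEpl (x₀ : V3) (mu : ℝ) (𝔠 : ℝ × ℝ → M32 →ₗ[ℝ] M32) (lam : ℝ) (rc : CurveW22) (M : MembraneH1) : Prop :=
  CurveBC x₀ rc ∧ ∀ s : CurveW22, ∀ Y : MembraneH1, CurveBC x₀ s →
    Epl mu 𝔠 lam rc M ≤ Epl mu 𝔠 lam s Y

/-- The class `𝓜_p`: minimizers of `𝓔_p` over `𝒞_p` that are weak limits of
minimizers of `𝓔_p^{λ_h}` over `𝒞'_p` for some `λ_h → +∞`. -/
def Mp (x₀ : V3) (mu : ℝ) (𝔠 : ℝ × ℝ → M32 →ₗ[ℝ] M32) (rc : CurveW22) (M : MembraneH1) : Prop :=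
  MinEp x₀ mu 𝔠 rc M ∧
    ∃ (lam : ℕ → ℝ) (rh : ℕ → CurveW22) (Mh : ℕ → MembraneH1),
      (∀ n, 0 < lam n) ∧ Tendsto lam atTop atTop ∧
      (∀ n, MinEpl x₀ mu 𝔠 (lam n) (rh n) (Mh n)) ∧
      WeakW22 rh rc ∧ WeakW12 Mh M

/-- A framed curve `(t|n|b) ∈ W^{1,p}((0,2π);SO(3))`, through absolutely
continuous representatives with `L^p` derivatives; the columns form an
orthonormal positively oriented basis (`b = t × n`). -/
structure FrameSO3 (p : ℝ) where
  t : ℝ → V3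
  n : ℝ → V3
  b : ℝ → V3
  t' : ℝ → V3
  n' : ℝ → V3
  b' : ℝ → V3
  int_t : ∀ θ : ℝ, IntervalIntegrable t' volume 0 θ
  int_n : ∀ θ : ℝ, IntervalIntegrable n' volume 0 θ
  int_b : ∀ θ : ℝ, IntervalIntegrable b' volume 0 θ
  ac_t : ∀ θ : ℝ, t θ = t 0 + ∫ s in (0:ℝ)..θ, t' s
  ac_n : ∀ θ : ℝ, n θ = n 0 + ∫ s in (0:ℝ)..θ, n' s
  ac_b : ∀ θ : ℝ, b θ = b 0 + ∫ s in (0:ℝ)..θ, b' s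
  mem_t : MemLp t' (ENNReal.ofReal p) μI
  mem_n : MemLp n' (ENNReal.ofReal p) μI
  mem_b : MemLp b' (ENNReal.ofReal p) μI
  deriv_t : ∀ᵐ θ ∂μI, HasDerivAt t (t' θ) θ
  deriv_n : ∀ᵐ θ ∂μI, HasDerivAt n (n' θ) θ
  deriv_b : ∀ᵐ θ ∂μI, HasDerivAt b (b' θ) θ
  ortho : ∀ θ ∈ Set.Icc (0:ℝ) (2 * π),
    nsq3 (t θ) = 1 ∧ nsq3 (n θ) = 1 ∧ nsq3 (b θ) = 1 ∧
    dot3 (t θ) (n θ) = 0 ∧ dot3 (t θ) (b θ) = 0 ∧ dot3 (n θ) (b θ) = 0 ∧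
    b θ = cross3 (t θ) (n θ)

/-- Weak (signed) curvature `κ = t'·n` of a framed curve. -/
def kappaF {p : ℝ} (F : FrameSO3 p) (θ : ℝ) : ℝ := dot3 (F.t' θ) (F.n θ)
/-- Weak torsion `τ = n'·b` of a framed curve. -/
def tauF {p : ℝ} (F : FrameSO3 p) (θ : ℝ) : ℝ := dot3 (F.n' θ) (F.b θ)

/-- The constraints on the frame: `t'·b = 0` a.e., closure `∫ t = 0`,
`t(2π) = t(0)`. -/
def FrameConstr {p : ℝ} (F : FrameSO3 p) : Prop :=
  (∀ᵐ θ ∂μI, dot3 (F.t' θ) (F.b θ) = 0) ∧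
  (∫ θ in Set.Ioo 0 (2 * π), F.t θ) = 0 ∧ F.t (2 * π) = F.t 0

/-- The curve clamped at `x₀` generated by the frame. -/
def curveOf {p : ℝ} (x₀ : V3) (F : FrameSO3 p) (θ : ℝ) : V3 :=
  x₀ + ∫ s in (0:ℝ)..θ, F.t s

/-- The constraint set `𝒞_f` of the framed-curve approach. -/
def Cf {p : ℝ} (x₀ : V3) (F : FrameSO3 p) (M : MembraneH1) : Prop :=
  FrameConstr F ∧ ∀ᵐ θ ∂μI, M.tr θ = curveOf x₀ F θ

/-- The total energy `𝓔_f` of the framed-curve approach. -/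
def Ef {p : ℝ} (f : ℝ × ℝ → ℝ) (Ψ : M32 → ℝ) (mu : ℝ) (F : FrameSO3 p) (M : MembraneH1) : ℝ :=
  (∫ θ in Set.Ioo 0 (2 * π), f (kappaF F θ, tauF F θ)) +
    (mu / 2) * ∫ q in Disc, Ψ (gradM M q)

/-- Morrey quasiconvexity for `Φ : ℝ^{3×2} → ℝ`. -/
def QuasiconvexM (Φ : M32 → ℝ) : Prop :=
  ∀ Ω : Set (ℝ × ℝ), IsOpen Ω → Bornology.IsBounded Ω → ∀ A : M32,
    ∀ ξ : ℝ × ℝ → V3, ContDiff ℝ 1 ξ → HasCompactSupport ξ → tsupport ξ ⊆ Ω →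
      (volume Ω).toReal * Φ A ≤ ∫ q in Ω, Φ (A + gradC1 ξ q)

/-- `g` is the weak derivative of `u` on `(0,2π)`. -/
def HasWeakDerivI (u g : ℝ → ℝ) : Prop :=
  ∀ φ : ℝ → ℝ, ContDiff ℝ (⊤ : ℕ∞) φ → tsupport φ ⊆ Set.Ioo 0 (2 * π) →
    (∫ θ in Set.Ioo 0 (2 * π), u θ * deriv φ θ) = - ∫ θ in Set.Ioo 0 (2 * π), g θ * φ θ

/-- The matrix with a `1` in entry `(i,j)` and `0` elsewhere. -/
def EijM (i : Fin 3) (j : Fin 2) : M32 := fun i' j' => if i' = i ∧ j' = j then 1 else 0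

/-- The gradient `DΨ(A) ∈ ℝ^{3×2}` of `Ψ : ℝ^{3×2} → ℝ`. -/
def DPsi (Ψ : M32 → ℝ) (A : M32) : M32 := fun i j => fderiv ℝ Ψ A (EijM i j)

/-- The boundary force density `(DΨ(∇X) ∘ c) ν_D` for a membrane. -/
def bforcePsi (Ψ : M32 → ℝ) (M : MembraneH1) (s : ℝ) : V3 := fun i =>
  DPsi Ψ (gradM M (circ s)) i 0 * Real.cos s + DPsi Ψ (gradM M (circ s)) i 1 * Real.sin s

/-- The boundary force density `(DΨ(∇X) ∘ c) ν_D` for a smooth map `X`. -/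
def bforceSm (Ψ : M32 → ℝ) (X : ℝ × ℝ → V3) (s : ℝ) : V3 := fun i =>
  DPsi Ψ (gradC1 X (circ s)) i 0 * Real.cos s + DPsi Ψ (gradC1 X (circ s)) i 1 * Real.sin s

/-- A membrane whose boundary trace `tr = X̂ ∘ c` has the regularity coming
from `X ∈ W^{3,2}(D;ℝ³)` (so `X̂ ∈ W^{5/2,2}(∂D;ℝ³) ⊂ C¹`): `tr` is `2π`-periodic,
`C¹` with derivative `tr'`, and `tr'` is absolutely continuous with density
`tr'' ∈ L²`. -/
structure MembraneW32 extends MembraneH1 where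
  tr' : ℝ → V3
  tr'' : ℝ → V3
  per : ∀ θ : ℝ, toMembraneH1.tr (θ + 2 * π) = toMembraneH1.tr θ
  deriv_tr : ∀ θ : ℝ, HasDerivAt toMembraneH1.tr (tr' θ) θ
  int_tr'' : ∀ θ : ℝ, IntervalIntegrable tr'' volume 0 θ
  ac_tr : ∀ θ : ℝ, tr' θ = tr' 0 + ∫ s in (0:ℝ)..θ, tr'' s
  mem_tr'' : MemLp tr'' 2 μI

/-- Trace on the boundary (composed with `circ`) of a map defined on `ℝ²`. -/
def trV (V : ℝ × ℝ → V3) (θ : ℝ) : V3 := V (circ θ)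

/-- The penalized numerical energy `Ẽ_n[X + tV, ℓ]` along the variation
`X ↦ X + tV` of the membrane. -/
def EtilVarX (mu : ℝ) (𝔠 : ℝ × ℝ → M32 →ₗ[ℝ] M32) (M : MembraneW32) (ℓ : ℝ → ℝ)
    (V : ℝ × ℝ → V3) (t : ℝ) : ℝ :=
  (∫ θ in Set.Ioo 0 (2 * π), nsq3 (M.tr'' θ + t • deriv (deriv (trV V)) θ)) +
    (mu / 2) * (∫ p in Disc,
      dotM (𝔠 p (gradM M.toMembraneH1 p + t • gradC1 V p))
        (gradM M.toMembraneH1 p + t • gradC1 V p)) +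
    ∫ θ in Set.Ioo 0 (2 * π), ℓ θ * (nsq3 (M.tr' θ + t • deriv (trV V) θ) - 1)

/-- The first variation of `Ẽ_n` with respect to the membrane. -/
def Egrad1 (mu : ℝ) (𝔠 : ℝ × ℝ → M32 →ₗ[ℝ] M32) (M : MembraneW32) (ℓ : ℝ → ℝ)
    (V : ℝ × ℝ → V3) : ℝ :=
  2 * (∫ θ in Set.Ioo 0 (2 * π), dot3 (deriv (deriv (trV V)) θ) (M.tr'' θ)) +
    mu * (∫ p in Disc, dotM (𝔠 p (gradM M.toMembraneH1 p)) (gradC1 V p)) +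
    2 * ∫ θ in Set.Ioo 0 (2 * π), ℓ θ * dot3 (deriv (trV V) θ) (M.tr' θ)

/-- The penalized numerical energy `Ẽ_n[X, ℓ + sm]` along the variation
`ℓ ↦ ℓ + sm` of the Lagrange multiplier. -/
def EtilVarL (mu : ℝ) (𝔠 : ℝ × ℝ → M32 →ₗ[ℝ] M32) (M : MembraneW32) (ℓ : ℝ → ℝ)
    (m : ℝ → ℝ) (s : ℝ) : ℝ :=
  (∫ θ in Set.Ioo 0 (2 * π), nsq3 (M.tr'' θ)) +
    (mu / 2) * (∫ p in Disc,
      dotM (𝔠 p (gradM M.toMembraneH1 p)) (gradM M.toMembraneH1 p)) +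
    ∫ θ in Set.Ioo 0 (2 * π), (ℓ θ + s * m θ) * (nsq3 (M.tr' θ) - 1)

/-- The functional `Ẽ_p`, equal to `𝓔_p` on `𝒞_p` and `+∞` outside. -/
def EpT (x₀ : V3) (mu : ℝ) (𝔠 : ℝ × ℝ → M32 →ₗ[ℝ] M32) (rc : CurveW22) (M : MembraneH1) : EReal := by
  classical exact if Cp x₀ rc M then ((Ep mu 𝔠 rc M : ℝ) : EReal) else ⊤


lemma dot3_add_left (a b c : V3) : dot3 (a + b) c = dot3 a c + dot3 b c := by
  simp [dot3, Fin.sum_univ_three]; ring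

lemma dot3_smul_left (s : ℝ) (a c : V3) : dot3 (s • a) c = s * dot3 a c := by
  simp [dot3, Fin.sum_univ_three]; ring

lemma dot3_comm (a c : V3) : dot3 a c = dot3 c a := by
  simp [dot3, Fin.sum_univ_three]; ring

lemma dot3_smul_right (s : ℝ) (a c : V3) : dot3 a (s • c) = s * dot3 a c := by
  rw [dot3_comm, dot3_smul_left, dot3_comm]

lemma hasDerivAt_dot3 {f h : ℝ → V3} {f' h' : V3} {x : ℝ}
    (hf : HasDerivAt f f' x) (hh : HasDerivAt h h' x) :
    HasDerivAt (fun s => dot3 (f s) (h s)) (dot3 f' (h x) + dot3 (f x) h') x := by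
  have hfi := hasDerivAt_pi.mp hf
  have hhi := hasDerivAt_pi.mp hh
  have H : HasDerivAt (fun s => ∑ i : Fin 3, f s i * h s i)
      (∑ i : Fin 3, (f' i * h x i + f x i * h' i)) x :=
    HasDerivAt.fun_sum fun i _ => (hfi i).mul (hhi i)
  have e1 : (fun s => ∑ i : Fin 3, f s i * h s i) = fun s => dot3 (f s) (h s) := by
    funext s; simp [dot3]
  have e2 : (∑ i : Fin 3, (f' i * h x i + f x i * h' i))
      = dot3 f' (h x) + dot3 (f x) h' := by
    simp [dot3, Fin.sum_univ_three]; ring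
  rw [e1, e2] at H; exact H

lemma deriv_zero_on_Icc {f : ℝ → ℝ} {θ : ℝ} (hf : DifferentiableAt ℝ f θ)
    (h0 : ∀ s ∈ Set.Icc (0:ℝ) (2 * π), f s = 0)
    (hθ : θ ∈ Set.Icc (0:ℝ) (2 * π)) : deriv f θ = 0 := by
  have hu : UniqueDiffWithinAt ℝ (Set.Icc (0:ℝ) (2 * π)) θ :=
    (uniqueDiffOn_Icc (by positivity)) θ hθ
  have h1 : HasDerivWithinAt f 0 (Set.Icc (0:ℝ) (2 * π)) θ :=
    (hasDerivWithinAt_const θ _ (0:ℝ)).congr (fun s hs => h0 s hs) (h0 θ hθ)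
  rw [← hf.derivWithin hu]
  exact h1.derivWithin hu

/-- Remark 3.7 of the paper: for a smooth unit-speed curve
`r` with Frenet frame `(t,n,b) = (r',n,b)`, nowhere vanishing curvature `κ`,
torsion `τ`, and a smooth field `g`, if `(2r''' + g)_⊥ = 0` then
`−g'·b = 4κ'τ + 2κτ'` and `(−2κ''/κ + 2τ² − (g'·n)/κ)' + g'·t − 2κκ' = 0`. -/
theorem statement_15 (r n b : ℝ → V3) (κ τ : ℝ → ℝ) (g : ℝ → V3)
    (hr : ContDiff ℝ (⊤ : ℕ∞) r) (hn : ContDiff ℝ (⊤ : ℕ∞) n) (hb : ContDiff ℝ (⊤ : ℕ∞) b)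
    (hκ : ContDiff ℝ (⊤ : ℕ∞) κ) (hτ : ContDiff ℝ (⊤ : ℕ∞) τ) (hg : ContDiff ℝ (⊤ : ℕ∞) g)
    (hunit : ∀ θ ∈ Set.Icc (0:ℝ) (2 * π), nsq3 (deriv r θ) = 1)
    (hortho : ∀ θ ∈ Set.Icc (0:ℝ) (2 * π),
      nsq3 (n θ) = 1 ∧ nsq3 (b θ) = 1 ∧ dot3 (deriv r θ) (n θ) = 0 ∧
      dot3 (deriv r θ) (b θ) = 0 ∧ dot3 (n θ) (b θ) = 0)
    (hSF : ∀ θ ∈ Set.Icc (0:ℝ) (2 * π),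
      deriv (deriv r) θ = κ θ • n θ ∧
      deriv n θ = -κ θ • deriv r θ + τ θ • b θ ∧
      deriv b θ = -τ θ • n θ)
    (hκ0 : ∀ θ ∈ Set.Icc (0:ℝ) (2 * π), κ θ ≠ 0)
    (hperp : ∀ θ ∈ Set.Icc (0:ℝ) (2 * π),
      perp (deriv r θ) ((2:ℝ) • deriv (deriv (deriv r)) θ + g θ) = 0) :
    ∀ θ ∈ Set.Icc (0:ℝ) (2 * π),
      (-(dot3 (deriv g θ) (b θ)) = 4 * deriv κ θ * τ θ + 2 * κ θ * deriv τ θ) ∧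
      (deriv (fun s => -2 * deriv (deriv κ) s / κ s + 2 * τ s ^ 2 -
          dot3 (deriv g s) (n s) / κ s) θ +
        dot3 (deriv g θ) (deriv r θ) - 2 * κ θ * deriv κ θ = 0) := by
  have twopi : (0:ℝ) < 2 * π := by positivity
  have hone : ((⊤:ℕ∞) : WithTop ℕ∞) ≠ 0 := by simp
  -- smoothness chain
  have hr' : ContDiff ℝ ((⊤:ℕ∞) : WithTop ℕ∞) r := hr.of_le (by simp)
  have hκ' : ContDiff ℝ ((⊤:ℕ∞) : WithTop ℕ∞) κ := hκ.of_le (by simp)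
  have hg' : ContDiff ℝ ((⊤:ℕ∞) : WithTop ℕ∞) g := hg.of_le (by simp)
  have hn' : ContDiff ℝ ((⊤:ℕ∞) : WithTop ℕ∞) n := hn.of_le (by simp)
  have hb' : ContDiff ℝ ((⊤:ℕ∞) : WithTop ℕ∞) b := hb.of_le (by simp)
  have hτ' : ContDiff ℝ ((⊤:ℕ∞) : WithTop ℕ∞) τ := hτ.of_le (by simp)
  have hrD : Differentiable ℝ r := hr'.differentiable hone
  have hr1 : ContDiff ℝ ((⊤:ℕ∞) : WithTop ℕ∞) (deriv r) := (contDiff_infty_iff_deriv.mp hr').2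
  have hr2 : ContDiff ℝ ((⊤:ℕ∞) : WithTop ℕ∞) (deriv (deriv r)) := (contDiff_infty_iff_deriv.mp hr1).2
  have hκ1 : ContDiff ℝ ((⊤:ℕ∞) : WithTop ℕ∞) (deriv κ) := (contDiff_infty_iff_deriv.mp hκ').2
  have hκ2 : ContDiff ℝ ((⊤:ℕ∞) : WithTop ℕ∞) (deriv (deriv κ)) := (contDiff_infty_iff_deriv.mp hκ1).2
  have hg1 : ContDiff ℝ ((⊤:ℕ∞) : WithTop ℕ∞) (deriv g) := (contDiff_infty_iff_deriv.mp hg').2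
  have hnD : Differentiable ℝ n := hn'.differentiable hone
  have hbD : Differentiable ℝ b := hb'.differentiable hone
  have hgD : Differentiable ℝ g := hg'.differentiable hone
  have hκD : Differentiable ℝ κ := hκ'.differentiable hone
  have hτD : Differentiable ℝ τ := hτ'.differentiable hone
  have hr1D : Differentiable ℝ (deriv r) := hr1.differentiable hone
  have hr2D : Differentiable ℝ (deriv (deriv r)) := hr2.differentiable hone
  have hκ1D : Differentiable ℝ (deriv κ) := hκ1.differentiable hone
  have hκ2D : Differentiable ℝ (deriv (deriv κ)) := hκ2.differentiable hone
  have hg1D : Differentiable ℝ (deriv g) := hg1.differentiable hone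
  -- third derivative formula on the interval
  have hr3v : ∀ s ∈ Set.Icc (0:ℝ) (2 * π), deriv (deriv (deriv r)) s
      = deriv κ s • n s + κ s • (-κ s • deriv r s + τ s • b s) := by
    intro s hs
    funext i
    have hdiff : DifferentiableAt ℝ
        (fun u => deriv (deriv r) u i - κ u * n u i) s := by
      apply DifferentiableAt.sub
      · exact (hasDerivAt_pi.mp (hr2D s).hasDerivAt i).differentiableAt
      · exact (hκD s).mul (hasDerivAt_pi.mp (hnD s).hasDerivAt i).differentiableAt
    have h0 : ∀ u ∈ Set.Icc (0:ℝ) (2 * π), deriv (deriv r) u i - κ u * n u i = 0 := by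
      intro u hu
      have := (hSF u hu).1
      rw [this]
      simp
    have hzero := deriv_zero_on_Icc hdiff h0 hs
    have hD : HasDerivAt (fun u => deriv (deriv r) u i - κ u * n u i)
        (deriv (deriv (deriv r)) s i - (deriv κ s * n s i + κ s * deriv n s i)) s := by
      exact (hasDerivAt_pi.mp (hr2D s).hasDerivAt i).sub
        (((hκD s).hasDerivAt).mul (hasDerivAt_pi.mp (hnD s).hasDerivAt i))
    rw [hD.deriv] at hzero
    have hns := (hSF s hs).2.1
    have : deriv (deriv (deriv r)) s i = deriv κ s * n s i + κ s * deriv n s i := by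
      linarith
    rw [this, hns]
    simp [mul_add]
  -- orthogonality facts, abbreviations
  intro θ hθ
  -- perp consequences: g·n = -2κ', g·b = -2κτ on the interval
  have hgn : ∀ s ∈ Set.Icc (0:ℝ) (2 * π), dot3 (g s) (n s) = -(2 * deriv κ s) := by
    intro s hs
    obtain ⟨hn1, hb1, htn, htb, hnb⟩ := hortho s hs
    have hp := hperp s hs
    rw [perp, sub_eq_zero] at hp
    have := congrArg (fun v => dot3 v (n s)) hp
    rw [dot3_smul_left, dot3_add_left, dot3_smul_left, hr3v s hs,
      dot3_add_left, dot3_smul_left, dot3_smul_left, dot3_add_left,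
      dot3_smul_left, dot3_smul_left] at this
    have hnn : dot3 (n s) (n s) = 1 := hn1
    have hnb' : dot3 (b s) (n s) = 0 := by rw [dot3_comm]; exact hnb
    rw [hnn, htn, hnb'] at this
    linarith [this]
  have hgb : ∀ s ∈ Set.Icc (0:ℝ) (2 * π), dot3 (g s) (b s) = -(2 * κ s * τ s) := by
    intro s hs
    obtain ⟨hn1, hb1, htn, htb, hnb⟩ := hortho s hs
    have hp := hperp s hs
    rw [perp, sub_eq_zero] at hp
    have := congrArg (fun v => dot3 v (b s)) hp
    rw [dot3_smul_left, dot3_add_left, dot3_smul_left, hr3v s hs,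
      dot3_add_left, dot3_smul_left, dot3_smul_left, dot3_add_left,
      dot3_smul_left, dot3_smul_left] at this
    have hbb : dot3 (b s) (b s) = 1 := hb1
    rw [hnb, htb, hbb] at this
    linarith [this]
  constructor
  · -- first identity
    set A : ℝ → ℝ := fun s => dot3 (g s) (b s) + 2 * (κ s * τ s) with hA
    have hA0 : ∀ s ∈ Set.Icc (0:ℝ) (2 * π), A s = 0 := by
      intro s hs
      have := hgb s hs
      simp only [hA]
      linarith
    have hAD : HasDerivAt A
        ((dot3 (deriv g θ) (b θ) + dot3 (g θ) (deriv b θ))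
          + 2 * (deriv κ θ * τ θ + κ θ * deriv τ θ)) θ := by
      exact (hasDerivAt_dot3 (hgD θ).hasDerivAt (hbD θ).hasDerivAt).add
        ((((hκD θ).hasDerivAt).mul ((hτD θ).hasDerivAt)).const_mul 2)
    have hz := deriv_zero_on_Icc hAD.differentiableAt hA0 hθ
    rw [hAD.deriv] at hz
    have hbd := (hSF θ hθ).2.2
    have hgb' : dot3 (g θ) (deriv b θ) = -τ θ * dot3 (g θ) (n θ) := by
      rw [hbd]
      have : (-τ θ • n θ : V3) = (-τ θ) • n θ := rfl
      rw [this, dot3_smul_right]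
    rw [hgb', hgn θ hθ] at hz
    nlinarith [hz]
  · -- second identity
    have hgn' : ∀ s ∈ Set.Icc (0:ℝ) (2 * π), dot3 (deriv g s) (n s)
        = -(2 * deriv (deriv κ) s) + κ s * dot3 (g s) (deriv r s) + 2 * κ s * τ s ^ 2 := by
      intro s hs
      set B : ℝ → ℝ := fun u => dot3 (g u) (n u) + 2 * deriv κ u with hBdef
      have hB0 : ∀ u ∈ Set.Icc (0:ℝ) (2 * π), B u = 0 := by
        intro u hu
        have := hgn u hu
        simp only [hBdef]
        linarith
      have hBD : HasDerivAt B
          ((dot3 (deriv g s) (n s) + dot3 (g s) (deriv n s))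
            + 2 * deriv (deriv κ) s) s := by
        exact (hasDerivAt_dot3 (hgD s).hasDerivAt (hnD s).hasDerivAt).add
          (((hκ1D s).hasDerivAt).const_mul 2)
      have hz := deriv_zero_on_Icc hBD.differentiableAt hB0 hs
      rw [hBD.deriv] at hz
      have hnd := (hSF s hs).2.1
      have hgn2 : dot3 (g s) (deriv n s)
          = -κ s * dot3 (g s) (deriv r s) + τ s * dot3 (g s) (b s) := by
        rw [hnd, dot3_comm, dot3_add_left]
        have e1 : (-κ s • deriv r s : V3) = (-κ s) • deriv r s := rfl
        rw [e1, dot3_smul_left, dot3_smul_left, dot3_comm (deriv r s), dot3_comm (b s)]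
      rw [hgn2, hgb s hs] at hz
      nlinarith [hz]
    -- the function inside deriv equals -g·r' on the interval
    set F : ℝ → ℝ := fun s => -2 * deriv (deriv κ) s / κ s + 2 * τ s ^ 2 -
        dot3 (deriv g s) (n s) / κ s with hFdef
    set G : ℝ → ℝ := fun s => dot3 (g s) (deriv r s) with hGdef
    have hFG0 : ∀ s ∈ Set.Icc (0:ℝ) (2 * π), F s + G s = 0 := by
      intro s hs
      have hκs := hκ0 s hs
      have h := hgn' s hs
      simp only [hFdef, hGdef]
      rw [h]
      field_simp
      ring
    have hFdiff : DifferentiableAt ℝ F θ := by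
      have hκθ := hκ0 θ hθ
      apply DifferentiableAt.sub
      apply DifferentiableAt.add
      · exact (((hκ2D θ).const_mul (-2)).div (hκD θ) hκθ)
      · exact ((hτD θ).pow 2).const_mul 2
      · exact ((hasDerivAt_dot3 (hg1D θ).hasDerivAt (hnD θ).hasDerivAt).differentiableAt).div
          (hκD θ) hκθ
    have hGD' : HasDerivAt G
        (dot3 (deriv g θ) (deriv r θ) + dot3 (g θ) (deriv (deriv r) θ)) θ :=
      hasDerivAt_dot3 (hgD θ).hasDerivAt (hr1D θ).hasDerivAt
    have hz := deriv_zero_on_Icc (hFdiff.add hGD'.differentiableAt) hFG0 hθ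
    rw [deriv_add hFdiff hGD'.differentiableAt, hGD'.deriv] at hz
    have hgr2 : dot3 (g θ) (deriv (deriv r) θ) = κ θ * dot3 (g θ) (n θ) := by
      rw [(hSF θ hθ).1, dot3_smul_right]
    rw [hgr2, hgn θ hθ] at hz
    have hgoal : deriv F θ + dot3 (deriv g θ) (deriv r θ) - 2 * κ θ * deriv κ θ = 0 := by
      linarith
    exact hgoal


end
end

section
/- Let η ∈ C²([0,2π];ℝ³) and set δ₀ = (1/(4π)) ∫₀^{2π} |η'|² dθ. Then there exist ε > 0 and a C¹ function δ : (−ε,ε) → ℝ with δ(0) = δ₀ such that for every t ∈ (−ε,ε), ∫₀^{2π} √((1 − t²δ(t))² + t²|η'(s)|²) ds = 2π. Consequently, if r ∈ W^{2,2}((0,2π);ℝ³) satisfies |r'| = 1 and r'·η' = 0 on [0,2π], the curves r̃^t = (1 − t²δ(t)) r + t η have speed |(r̃^t)'(s)| = √((1 − t²δ(t))² + t²|η'(s)|²) and total length 2π for every t ∈ (−ε,ε). -/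
open MeasureTheory Real Set Filter Topology

noncomputable section

lemma nsq3_nonneg (a : V3) : 0 ≤ nsq3 a := by
  unfold nsq3 dot3; exact Finset.sum_nonneg fun i _ => mul_self_nonneg _

lemma continuous_nsq3 : Continuous (fun a : V3 => nsq3 a) := by
  unfold nsq3 dot3
  exact continuous_finset_sum _ fun i _ => (continuous_apply i).mul (continuous_apply i)

lemma nsq3_smul_add (c t : ℝ) (a b : V3) :
    nsq3 (c • a + t • b) = c^2 * nsq3 a + 2*c*t*dot3 a b + t^2*nsq3 b := by
  simp [nsq3, dot3, Fin.sum_univ_three]; ring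

/-- the basic algebraic kernel -/
def PP (q : (ℝ × ℝ) × ℝ) : ℝ :=
  (q.2 - 2*q.1.2 + q.1.1^2*q.1.2^2) /
    (Real.sqrt ((1 - q.1.1^2*q.1.2)^2 + q.1.1^2*q.2) + 1)

def AA (q : (ℝ × ℝ) × ℝ) : ℝ := (1 - q.1.1^2*q.1.2)^2 + q.1.1^2*q.2

lemma PP_cont : Continuous PP := by
  apply Continuous.div
  · fun_prop
  · fun_prop
  · intro q
    positivity

lemma PP_contDiffAt {q : (ℝ × ℝ) × ℝ} (hq : AA q ≠ 0) : ContDiffAt ℝ 1 PP q := by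
  have hq' : ((1 - q.1.1^2*q.1.2)^2 + q.1.1^2*q.2) ≠ 0 := hq
  have hinner : ContDiffAt ℝ 1 (fun q : (ℝ × ℝ) × ℝ =>
      (1 - q.1.1^2*q.1.2)^2 + q.1.1^2*q.2) q := by fun_prop
  apply ContDiffAt.div
  · fun_prop
  · exact ((Real.contDiffAt_sqrt hq').comp q hinner).add contDiffAt_const
  · positivity

lemma PP_slice2 (d₀ v : ℝ) : HasDerivAt (fun d : ℝ => PP ((0, d), v)) (-1) d₀ := by
  have heq : (fun d : ℝ => PP ((0, d), v)) = fun d => (v - 2*d)/2 := by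
    funext d; norm_num [PP]
  have h : HasDerivAt (fun d : ℝ => (v - 2*d)/2) ((-(2*1))/2) d₀ :=
    (((hasDerivAt_id d₀).const_mul 2).const_sub v).div_const 2
  rw [heq]
  norm_num at h
  exact h

lemma PP_slice1 (d₀ v : ℝ) : HasDerivAt (fun t : ℝ => PP ((t, d₀), v)) 0 0 := by
  have hnum : HasDerivAt (fun t : ℝ => v - 2*d₀ + t^2*d₀^2) 0 0 := by
    simpa using ((hasDerivAt_pow 2 (0:ℝ)).mul_const (d₀^2)).const_add (v - 2*d₀)
  have hu : HasDerivAt (fun t : ℝ => 1 - t^2*d₀) 0 0 := by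
    simpa using ((hasDerivAt_pow 2 (0:ℝ)).mul_const d₀).const_sub 1
  have hinner : HasDerivAt (fun t : ℝ => (1 - t^2*d₀)^2 + t^2*v) 0 0 := by
    simpa using (hu.fun_pow 2).fun_add ((hasDerivAt_pow 2 (0:ℝ)).mul_const v)
  have hA : ((1 - (0:ℝ)^2*d₀)^2 + (0:ℝ)^2*v) ≠ 0 := by norm_num
  have hsq : HasDerivAt (fun t : ℝ => Real.sqrt ((1 - t^2*d₀)^2 + t^2*v)) 0 0 := by
    simpa using hinner.sqrt hA
  have hden : HasDerivAt (fun t : ℝ => Real.sqrt ((1 - t^2*d₀)^2 + t^2*v) + 1) 0 0 :=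
    hsq.add_const 1
  have hdenne : (Real.sqrt ((1 - (0:ℝ)^2*d₀)^2 + (0:ℝ)^2*v) + 1) ≠ 0 := by positivity
  have h := hnum.fun_div hden hdenne
  simpa [PP] using h

lemma sqrt_eq_PP (t d v : ℝ) (hv : 0 ≤ v) :
    Real.sqrt ((1 - t^2*d)^2 + t^2*v) = 1 + t^2 * PP ((t, d), v) := by
  have hA : 0 ≤ (1 - t^2*d)^2 + t^2*v := by positivity
  have h1 : Real.sqrt ((1 - t^2*d)^2 + t^2*v) * Real.sqrt ((1 - t^2*d)^2 + t^2*v)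
      = (1 - t^2*d)^2 + t^2*v := Real.mul_self_sqrt hA
  have hD : 0 < Real.sqrt ((1 - t^2*d)^2 + t^2*v) + 1 := by positivity
  rw [show PP ((t, d), v) = (v - 2*d + t^2*d^2) /
    (Real.sqrt ((1 - t^2*d)^2 + t^2*v) + 1) from rfl]
  field_simp
  nlinarith [h1]

lemma inl_norm_le : ‖ContinuousLinearMap.inl ℝ (ℝ × ℝ) ℝ‖ ≤ 1 := by
  apply ContinuousLinearMap.opNorm_le_bound _ zero_le_one
  intro x
  rw [one_mul]
  simp [ContinuousLinearMap.inl_apply, Prod.norm_def]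

set_option maxHeartbeats 2000000 in
lemma key (g : ℝ → ℝ) (hg : Continuous g) (hg0 : ∀ s, 0 ≤ g s) :
    ∃ ε > (0:ℝ), ∃ δ : ℝ → ℝ, ContDiffOn ℝ 1 δ (Set.Ioo (-ε) ε) ∧
      δ 0 = (1 / (4 * π)) * (∫ θ in Set.Ioo 0 (2 * π), g θ) ∧
      ∀ t ∈ Set.Ioo (-ε) ε,
        (∫ s in (0:ℝ)..(2 * π), Real.sqrt ((1 - t ^ 2 * δ t) ^ 2 + t ^ 2 * g s)) = 2 * π := by
  have hπ : (0:ℝ) < π := Real.pi_pos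
  set d₀ : ℝ := (1 / (4 * π)) * (∫ θ in Set.Ioo 0 (2 * π), g θ) with hd₀
  set x₀ : ℝ × ℝ := (0, d₀) with hx₀def
  set r : ℝ := (2 * (|d₀| + 1))⁻¹ with hrdef
  have hr0 : 0 < r := by positivity
  have hrhalf : r * (|d₀| + 1) = 1/2 := by
    rw [hrdef]; field_simp
  have hr1 : r ≤ 1 := by nlinarith [abs_nonneg d₀]
  -- the geometric bound on the closed ball
  have hball : ∀ x : ℝ × ℝ, x ∈ Metric.closedBall x₀ r → ∀ v : ℝ, 0 ≤ v →
      (1:ℝ)/4 ≤ AA ((x, v)) := by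
    intro x hx v hv
    rw [Metric.mem_closedBall, Prod.dist_eq, max_le_iff, Real.dist_eq, Real.dist_eq] at hx
    obtain ⟨h1, h2⟩ := hx
    have hx1 : |x.1 - x₀.1| ≤ r := h1
    have hx2 : |x.2 - x₀.2| ≤ r := h2
    rw [hx₀def] at hx1 hx2
    simp only [sub_zero] at hx1 hx2
    have e1 : x.1^2 ≤ r := by
      have h := abs_le.1 hx1
      nlinarith
    have e2 : x.2 ≤ |d₀| + 1 := by
      have h := abs_le.1 hx2
      have := le_abs_self d₀
      linarith
    have e3 : x.1^2 * x.2 ≤ 1/2 := by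
      calc x.1^2 * x.2 ≤ x.1^2 * (|d₀| + 1) := by
              exact mul_le_mul_of_nonneg_left e2 (sq_nonneg _)
        _ ≤ r * (|d₀| + 1) := by
              exact mul_le_mul_of_nonneg_right e1 (by positivity)
        _ = 1/2 := hrhalf
    have : (1:ℝ)/2 ≤ 1 - x.1^2 * x.2 := by linarith
    show (1:ℝ)/4 ≤ (1 - x.1^2*x.2)^2 + x.1^2*v
    nlinarith [sq_nonneg x.1, mul_nonneg (sq_nonneg x.1) hv]
  have hmemΩ : ∀ x ∈ Metric.closedBall x₀ r, ∀ s : ℝ, AA (x, g s) ≠ 0 := by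
    intro x hx s
    have := hball x hx (g s) (hg0 s)
    positivity
  -- bound on g
  obtain ⟨M, hMb⟩ := isCompact_Icc.exists_bound_of_continuousOn
    (f := g) (s := Set.Icc (0:ℝ) (2*π)) hg.continuousOn
  have hM : ∀ s ∈ Set.Icc (0:ℝ) (2*π), g s ≤ M := by
    intro s hs
    have := hMb s hs
    rw [Real.norm_eq_abs] at this
    exact (le_abs_self _).trans this
  -- smoothness of PP on the relevant open set
  have hAAcont : Continuous AA := by unfold AA; fun_prop
  have hΩopen : IsOpen {q : (ℝ×ℝ)×ℝ | AA q ≠ 0} :=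
    isOpen_compl_singleton.preimage hAAcont
  have hPC1 : ContDiffOn ℝ 1 PP {q : (ℝ×ℝ)×ℝ | AA q ≠ 0} :=
    fun q hq => (PP_contDiffAt hq).contDiffWithinAt
  have hfc : ContinuousOn (fderiv ℝ PP) {q : (ℝ×ℝ)×ℝ | AA q ≠ 0} :=
    hPC1.continuousOn_fderiv_of_isOpen hΩopen le_rfl
  -- compact bound for the derivative
  have hK : IsCompact ((Metric.closedBall x₀ r) ×ˢ (Set.Icc (0:ℝ) M)) :=
    (isCompact_closedBall _ _).prod isCompact_Icc
  have hKsub : ((Metric.closedBall x₀ r) ×ˢ (Set.Icc (0:ℝ) M)) ⊆ {q : (ℝ×ℝ)×ℝ | AA q ≠ 0} := by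
    rintro ⟨x, v⟩ ⟨hx, hv⟩
    have := hball x hx v hv.1
    show AA (x, v) ≠ 0
    positivity
  obtain ⟨C, hC⟩ := hK.exists_bound_of_continuousOn (hfc.mono hKsub)
  have hM0 : 0 ≤ M := le_trans (hg0 0) (hM 0 ⟨le_rfl, by positivity⟩)
  have hC0 : 0 ≤ C :=
    (norm_nonneg _).trans (hC (x₀, 0) ⟨Metric.mem_closedBall_self hr0.le, le_rfl, hM0⟩)
  -- the parametric derivative
  set F' : (ℝ×ℝ) → ℝ → (ℝ×ℝ) →L[ℝ] ℝ := fun x s =>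
    (fderiv ℝ PP (x, g s)).comp (ContinuousLinearMap.inl ℝ (ℝ×ℝ) ℝ) with hF'def
  have hFd : ∀ x ∈ Metric.closedBall x₀ r, ∀ s : ℝ,
      HasFDerivAt (fun y : ℝ×ℝ => PP (y, g s)) (F' x s) x := by
    intro x hx s
    have hdiff : DifferentiableAt ℝ PP (x, g s) :=
      (PP_contDiffAt (hmemΩ x hx s)).differentiableAt one_ne_zero
    exact hdiff.hasFDerivAt.comp x (hasFDerivAt_prodMk_left (𝕜 := ℝ) x (g s))
  have hF'bound : ∀ x ∈ Metric.closedBall x₀ r, ∀ s ∈ Set.Icc (0:ℝ) (2*π),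
      ‖F' x s‖ ≤ C := by
    intro x hx s hs
    calc ‖F' x s‖ ≤ ‖fderiv ℝ PP (x, g s)‖ * ‖ContinuousLinearMap.inl ℝ (ℝ×ℝ) ℝ‖ :=
          ContinuousLinearMap.opNorm_comp_le _ _
      _ ≤ C * 1 := mul_le_mul (hC (x, g s) ⟨hx, hg0 s, hM s hs⟩) inl_norm_le
          (norm_nonneg _) hC0
      _ = C := mul_one C
  have hFxcont : ∀ x : ℝ×ℝ, Continuous (fun s => PP (x, g s)) :=
    fun x => PP_cont.comp (by fun_prop)
  have hF'conts : ∀ x ∈ Metric.closedBall x₀ r, Continuous (fun s => F' x s) := by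
    intro x hx
    apply Continuous.clm_comp _ continuous_const
    exact hfc.comp_continuous (by fun_prop) (fun s => hmemΩ x hx s)
  have hF'contAt : ∀ x ∈ Metric.ball x₀ r, ∀ s : ℝ,
      ContinuousAt (fun y : ℝ×ℝ => F' y s) x := by
    intro x hx s
    have h1 : ContinuousAt (fun y : ℝ×ℝ => fderiv ℝ PP (y, g s)) x := by
      apply ContinuousAt.comp
      · exact hfc.continuousAt (hΩopen.mem_nhds
          (hmemΩ x (Metric.ball_subset_closedBall hx) s))
      · exact (continuous_id.prodMk continuous_const).continuousAt
    have h2 := (((ContinuousLinearMap.compL ℝ (ℝ×ℝ) ((ℝ×ℝ)×ℝ) ℝ).flip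
      (ContinuousLinearMap.inl ℝ (ℝ×ℝ) ℝ)).continuous.continuousAt).comp h1
    exact h2
  -- the function G
  set G : ℝ×ℝ → ℝ := fun x => ∫ s in (0:ℝ)..(2*π), PP (x, g s) with hGdef
  have hsub : ∀ x ∈ Metric.ball x₀ r, Metric.ball x (r - dist x x₀) ⊆ Metric.closedBall x₀ r := by
    intro x hx y hy
    rw [Metric.mem_ball] at hy
    rw [Metric.mem_closedBall]
    calc dist y x₀ ≤ dist y x + dist x x₀ := dist_triangle _ _ _
      _ ≤ r := by linarith
  have hIoc : ∀ s ∈ Set.uIoc (0:ℝ) (2*π), s ∈ Set.Icc (0:ℝ) (2*π) := by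
    intro s hs
    rw [Set.uIoc_of_le (by positivity)] at hs
    exact Set.Ioc_subset_Icc_self hs
  have hGderiv : ∀ x ∈ Metric.ball x₀ r,
      HasFDerivAt G (∫ s in (0:ℝ)..(2*π), F' x s) x := by
    intro x hx
    have hε : 0 < r - dist x x₀ := by rw [Metric.mem_ball] at hx; linarith
    apply intervalIntegral.hasFDerivAt_integral_of_dominated_of_fderiv_le
      (F' := F') (bound := fun _ => C) (Metric.ball_mem_nhds x hε)
    · exact Filter.Eventually.of_forall fun y => (hFxcont y).aestronglyMeasurable
    · exact (hFxcont x).intervalIntegrable _ _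
    · exact (hF'conts x (Metric.ball_subset_closedBall hx)).aestronglyMeasurable
    · refine Filter.Eventually.of_forall fun s hs y hy => ?_
      exact hF'bound y (hsub x hx hy) s (hIoc s hs)
    · exact intervalIntegrable_const
    · refine Filter.Eventually.of_forall fun s hs y hy => ?_
      exact hFd y (hsub x hx hy) s
  have hG'cont : ContinuousOn (fun x => ∫ s in (0:ℝ)..(2*π), F' x s) (Metric.ball x₀ r) := by
    intro x hx
    apply ContinuousAt.continuousWithinAt
    apply intervalIntegral.continuousAt_of_dominated_interval (bound := fun _ => C)
    · filter_upwards [Metric.isOpen_ball.mem_nhds hx] with y hy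
      exact (hF'conts y (Metric.ball_subset_closedBall hy)).aestronglyMeasurable
    · filter_upwards [Metric.isOpen_ball.mem_nhds hx] with y hy
      exact Filter.Eventually.of_forall fun s hs =>
        hF'bound y (Metric.ball_subset_closedBall hy) s (hIoc s hs)
    · exact intervalIntegrable_const
    · exact Filter.Eventually.of_forall fun s _ => hF'contAt x hx s
  have hGC1 : ContDiffOn ℝ 1 G (Metric.ball x₀ r) := by
    have h01 : ((0:ℕ) + 1 : WithTop ℕ∞) = 1 := by norm_num
    rw [← h01, contDiffOn_succ_iff_fderiv_of_isOpen Metric.isOpen_ball]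
    refine ⟨fun x hx => (hGderiv x hx).differentiableAt.differentiableWithinAt, by simp, ?_⟩
    simp only [Nat.cast_zero, contDiffOn_zero]
    exact hG'cont.congr fun x hx => (hGderiv x hx).fderiv
  -- slice derivatives at the base point
  have hx₀ball : x₀ ∈ Metric.ball x₀ r := Metric.mem_ball_self hr0
  have hx₀cb : x₀ ∈ Metric.closedBall x₀ r := Metric.mem_closedBall_self hr0.le
  have hval1 : ∀ s : ℝ, F' x₀ s ((1:ℝ), (0:ℝ)) = 0 := by
    intro s
    have hline : HasDerivAt (fun t : ℝ => ((t, d₀) : ℝ×ℝ)) (((1:ℝ), (0:ℝ)) : ℝ×ℝ) 0 :=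
      (hasDerivAt_id 0).prodMk (hasDerivAt_const 0 d₀)
    have h := (hFd x₀ hx₀cb s).comp_hasDerivAt 0 hline
    exact h.unique (PP_slice1 d₀ (g s))
  have hval2 : ∀ s : ℝ, F' x₀ s ((0:ℝ), (1:ℝ)) = -1 := by
    intro s
    have hline : HasDerivAt (fun d : ℝ => (((0:ℝ), d) : ℝ×ℝ)) (((0:ℝ), (1:ℝ)) : ℝ×ℝ) d₀ :=
      (hasDerivAt_const d₀ 0).prodMk (hasDerivAt_id d₀)
    have h := (hFd x₀ hx₀cb s).comp_hasDerivAt d₀ hline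
    exact h.unique (PP_slice2 d₀ (g s))
  -- identify the derivative of G at x₀
  have hint : MeasureTheory.IntegrableOn (fun s => F' x₀ s) (Set.Ioc 0 (2*π)) volume :=
    (hF'conts x₀ hx₀cb).integrableOn_Ioc
  set L : (ℝ×ℝ) →L[ℝ] ℝ := (-(2*π) : ℝ) • ContinuousLinearMap.snd ℝ ℝ ℝ with hLdef
  have hG'x₀ : (∫ s in (0:ℝ)..(2*π), F' x₀ s) = L := by
    apply ContinuousLinearMap.ext
    intro w
    rw [intervalIntegral.integral_of_le (by positivity)]
    rw [ContinuousLinearMap.integral_apply hint w]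
    have hptw : ∀ s : ℝ, F' x₀ s w = -w.2 := by
      intro s
      have hw : w = w.1 • (((1:ℝ), (0:ℝ)) : ℝ×ℝ) + w.2 • (((0:ℝ), (1:ℝ)) : ℝ×ℝ) := by
        rw [Prod.ext_iff]; constructor <;> simp
      rw [hw, map_add, (F' x₀ s).map_smul, (F' x₀ s).map_smul, hval1 s, hval2 s]
      simp
    simp only [hptw]
    rw [MeasureTheory.setIntegral_const, measureReal_def, Real.volume_Ioc,
      ENNReal.toReal_ofReal (by nlinarith), hLdef]
    simp [smul_eq_mul]
  have hGL : HasFDerivAt G L x₀ := hG'x₀ ▸ hGderiv x₀ hx₀ball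
  -- the map Φ and its invertible derivative
  have hΦC1 : ContDiffAt ℝ 1 (fun x : ℝ×ℝ => (x.1, G x)) x₀ :=
    (contDiff_fst.contDiffAt).prodMk (hGC1.contDiffAt (Metric.isOpen_ball.mem_nhds hx₀ball))
  have hne : (-(2*π) : ℝ) ≠ 0 := by nlinarith
  set L2 : (ℝ×ℝ) →L[ℝ] (ℝ×ℝ) := (ContinuousLinearMap.fst ℝ ℝ ℝ).prod L with hL2def
  set L2inv : (ℝ×ℝ) →L[ℝ] (ℝ×ℝ) := (ContinuousLinearMap.fst ℝ ℝ ℝ).prod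
    ((-(2*π) : ℝ)⁻¹ • ContinuousLinearMap.snd ℝ ℝ ℝ) with hL2invdef
  have hleft : Function.LeftInverse L2inv L2 := by
    intro x
    rw [hL2def, hL2invdef]
    simp only [ContinuousLinearMap.prod_apply, ContinuousLinearMap.coe_fst',
      ContinuousLinearMap.coe_snd', ContinuousLinearMap.smul_apply, hLdef]
    rw [Prod.ext_iff]
    constructor
    · rfl
    · simp only [smul_eq_mul]
      field_simp
  have hrightInv : Function.RightInverse L2inv L2 := by
    intro x
    rw [hL2def, hL2invdef]
    simp only [ContinuousLinearMap.prod_apply, ContinuousLinearMap.coe_fst',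
      ContinuousLinearMap.coe_snd', ContinuousLinearMap.smul_apply, hLdef]
    rw [Prod.ext_iff]
    constructor
    · rfl
    · simp only [smul_eq_mul]
      field_simp
  set e : (ℝ×ℝ) ≃L[ℝ] (ℝ×ℝ) := ContinuousLinearEquiv.equivOfInverse L2 L2inv hleft hrightInv
    with hedef
  have hcoe : (e : (ℝ×ℝ) →L[ℝ] (ℝ×ℝ)) = L2 := rfl
  have hΦ' : HasFDerivAt (fun x : ℝ×ℝ => (x.1, G x)) (e : (ℝ×ℝ) →L[ℝ] (ℝ×ℝ)) x₀ := by
    rw [hcoe, hL2def]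
    exact (hasFDerivAt_fst).prodMk hGL
  -- value of Φ at the base point
  have hGx₀ : G x₀ = 0 := by
    have hPP0 : ∀ v : ℝ, PP (((0:ℝ), d₀), v) = (v - 2*d₀)/2 := by
      intro v; norm_num [PP]
    have hGeq : G x₀ = ∫ s in (0:ℝ)..(2*π), (g s - 2*d₀)/2 := by
      rw [hGdef]
      simp only [hx₀def]
      exact intervalIntegral.integral_congr fun s _ => hPP0 (g s)
    rw [hGeq, intervalIntegral.integral_div, intervalIntegral.integral_sub
      (hg.intervalIntegrable _ _) intervalIntegrable_const,
      intervalIntegral.integral_const, intervalIntegral.integral_of_le (by positivity),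
      MeasureTheory.integral_Ioc_eq_integral_Ioo, hd₀]
    rw [smul_eq_mul]
    have hπ' : π ≠ 0 := hπ.ne'
    field_simp
    ring
  have hΦx₀ : ((x₀.1, G x₀) : ℝ×ℝ) = ((0:ℝ), (0:ℝ)) := by
    rw [Prod.ext_iff]
    exact ⟨rfl, hGx₀⟩
  -- the local inverse
  have hstrict := hΦC1.hasStrictFDerivAt' hΦ' one_ne_zero
  set inv := hΦC1.localInverse hΦ' one_ne_zero with hinvdef
  have hinvC1 : ContDiffAt ℝ 1 inv (((0:ℝ),(0:ℝ))) := by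
    have h := hΦC1.to_localInverse (f' := e) hΦ' one_ne_zero
    rwa [hΦx₀] at h
  have hinv0 : inv ((0:ℝ),(0:ℝ)) = x₀ := by
    have h := hΦC1.localInverse_apply_image (f' := e) hΦ' one_ne_zero
    rwa [hΦx₀] at h
  have hrinv : ∀ᶠ y in 𝓝 (((0:ℝ),(0:ℝ)) : ℝ×ℝ),
      (fun x : ℝ×ℝ => (x.1, G x)) (inv y) = y := by
    have h := hstrict.eventually_right_inverse
    rwa [hΦx₀] at h
  -- the function δ
  set δf : ℝ → ℝ := fun t => (inv (t, 0)).2 with hδfdef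
  have hδ0 : δf 0 = d₀ := by
    show (inv ((0:ℝ),(0:ℝ))).2 = d₀
    rw [hinv0]
  have hδC1 : ContDiffAt ℝ 1 δf 0 := by
    have hin : ContDiffAt ℝ 1 (fun t : ℝ => ((t, (0:ℝ)) : ℝ×ℝ)) 0 :=
      contDiffAt_id.prodMk contDiffAt_const
    have h3 : ContDiffAt ℝ 1 (fun t : ℝ => inv (t, 0)) 0 :=
      ContDiffAt.comp (f := fun t : ℝ => ((t, (0:ℝ)) : ℝ×ℝ)) 0 hinvC1 hin
    have h4 : ContDiffAt ℝ 1 (fun t : ℝ => (inv (t, 0)).2) 0 :=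
      contDiff_snd.contDiffAt.comp 0 h3
    exact h4
  obtain ⟨u, hu, hδOn⟩ := hδC1.contDiffOn le_rfl (by simp)
  have htend : Filter.Tendsto (fun t : ℝ => ((t, (0:ℝ)) : ℝ×ℝ)) (𝓝 0)
      (𝓝 (((0:ℝ),(0:ℝ)) : ℝ×ℝ)) := by
    have h := (continuous_id.prodMk (continuous_const (y := (0:ℝ)))).tendsto (0:ℝ)
    simpa using h
  have hev : ∀ᶠ t in 𝓝 (0:ℝ), (fun x : ℝ×ℝ => (x.1, G x)) (inv (t, 0)) = (t, 0) :=
    htend.eventually hrinv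
  obtain ⟨ε, hε, hballsub⟩ := Metric.mem_nhds_iff.1 (Filter.inter_mem hu hev)
  refine ⟨ε, hε, δf, ?_, ?_, ?_⟩
  · apply hδOn.mono
    intro t ht
    have htb : t ∈ Metric.ball (0:ℝ) ε := by
      rw [Real.ball_eq_Ioo]; simpa using ht
    exact (hballsub htb).1
  · rw [hδ0, hd₀]
  · intro t ht
    have htb : t ∈ Metric.ball (0:ℝ) ε := by rw [Real.ball_eq_Ioo]; simpa using ht
    have hΦt := (hballsub htb).2
    have h1 : (inv (t, 0)).1 = t := congrArg Prod.fst hΦt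
    have h2 : G (inv (t, 0)) = 0 := congrArg Prod.snd hΦt
    have hpair : inv (t, (0:ℝ)) = (t, δf t) := by
      rw [Prod.ext_iff]; exact ⟨h1, rfl⟩
    rw [hpair] at h2
    have hG0 : (∫ s in (0:ℝ)..(2*π), PP ((t, δf t), g s)) = 0 := h2
    have hint2 : IntervalIntegrable (fun s => PP ((t, δf t), g s)) volume 0 (2*π) :=
      (hFxcont (t, δf t)).intervalIntegrable _ _
    have hcong : Set.EqOn (fun s => Real.sqrt ((1 - t^2*δf t)^2 + t^2 * g s))
        (fun s => 1 + t^2 * PP ((t, δf t), g s)) (Set.uIcc (0:ℝ) (2*π)) :=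
      fun s _ => sqrt_eq_PP t (δf t) (g s) (hg0 s)
    rw [intervalIntegral.integral_congr hcong,
      intervalIntegral.integral_add intervalIntegrable_const (hint2.const_mul (t^2)),
      intervalIntegral.integral_const_mul, hG0, intervalIntegral.integral_const]
    rw [smul_eq_mul]
    ring

/-- first part of the proof of Lemma 2.4 of the paper: via
the implicit function theorem there are `ε > 0` and a `C¹` function `δ` with
`δ(0) = δ₀ = (1/4π)∫|η'|²` such that `∫₀^{2π} √((1−t²δ(t))² + t²|η'|²) ds = 2π`
for `|t| < ε`; consequently, for a `W^{2,2}` curve `r` with `|r'| = 1` and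
`r'·η' = 0`, the curves `r̃^t = (1−t²δ(t))r + tη` have the stated speed and
total length `2π`. -/
theorem statement_17 (η : ℝ → V3) (hη : ContDiff ℝ 2 η) :
    ∃ ε > (0:ℝ), ∃ δ : ℝ → ℝ, ContDiffOn ℝ 1 δ (Set.Ioo (-ε) ε) ∧
      δ 0 = (1 / (4 * π)) * (∫ θ in Set.Ioo 0 (2 * π), nsq3 (deriv η θ)) ∧
      (∀ t ∈ Set.Ioo (-ε) ε,
        (∫ s in (0:ℝ)..(2 * π),
          Real.sqrt ((1 - t ^ 2 * δ t) ^ 2 + t ^ 2 * nsq3 (deriv η s))) = 2 * π) ∧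
      ∀ rc : CurveW22,
        (∀ s ∈ Set.Icc (0:ℝ) (2 * π), nsq3 (rc.r' s) = 1) →
        (∀ s ∈ Set.Icc (0:ℝ) (2 * π), dot3 (rc.r' s) (deriv η s) = 0) →
        ∀ t ∈ Set.Ioo (-ε) ε,
          (∀ s ∈ Set.Icc (0:ℝ) (2 * π),
            HasDerivAt (fun u => (1 - t ^ 2 * δ t) • rc.r u + t • η u)
              ((1 - t ^ 2 * δ t) • rc.r' s + t • deriv η s) s ∧
            norm3 ((1 - t ^ 2 * δ t) • rc.r' s + t • deriv η s) =
              Real.sqrt ((1 - t ^ 2 * δ t) ^ 2 + t ^ 2 * nsq3 (deriv η s))) ∧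
          (∫ s in (0:ℝ)..(2 * π),
            norm3 ((1 - t ^ 2 * δ t) • rc.r' s + t • deriv η s)) = 2 * π := by
  have hg : Continuous (fun s => nsq3 (deriv η s)) :=
    continuous_nsq3.comp (hη.continuous_deriv one_le_two)
  have hg0 : ∀ s, 0 ≤ nsq3 (deriv η s) := fun s => nsq3_nonneg _
  obtain ⟨ε, hε, δ, hC1, hδ0, hlen⟩ := key (fun s => nsq3 (deriv η s)) hg hg0
  refine ⟨ε, hε, δ, hC1, hδ0, hlen, ?_⟩
  intro rc hunit horth t ht
  have hηd : ∀ s : ℝ, HasDerivAt η (deriv η s) s := fun s =>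
    (hη.differentiable two_ne_zero s).hasDerivAt
  have hpt : ∀ s ∈ Set.Icc (0:ℝ) (2 * π),
      HasDerivAt (fun u => (1 - t ^ 2 * δ t) • rc.r u + t • η u)
        ((1 - t ^ 2 * δ t) • rc.r' s + t • deriv η s) s ∧
      norm3 ((1 - t ^ 2 * δ t) • rc.r' s + t • deriv η s) =
        Real.sqrt ((1 - t ^ 2 * δ t) ^ 2 + t ^ 2 * nsq3 (deriv η s)) := by
    intro s hs
    constructor
    · exact ((rc.deriv_r s).const_smul (1 - t ^ 2 * δ t)).add ((hηd s).const_smul t)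
    · show Real.sqrt (nsq3 _) = _
      rw [nsq3_smul_add, hunit s hs, horth s hs]
      congr 1
      ring
  refine ⟨hpt, ?_⟩
  have hInt : (∫ s in (0:ℝ)..(2 * π), norm3 ((1 - t ^ 2 * δ t) • rc.r' s + t • deriv η s))
      = ∫ s in (0:ℝ)..(2 * π),
          Real.sqrt ((1 - t ^ 2 * δ t) ^ 2 + t ^ 2 * nsq3 (deriv η s)) := by
    apply intervalIntegral.integral_congr
    intro s hs
    rw [Set.uIcc_of_le (by positivity)] at hs
    exact (hpt s hs).2
  rw [hInt]
  exact hlen t ht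

end
end
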